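/- For every integer n ≥ 1, the independence domination number of the chain triangular cactus T_n equals ⌊(n+1)/2⌋. -/

import Mathlib

/-!
Each triangle `x (k-1) x k y k` is the closed neighbourhood of its apex `y k`, so every dominating
set meets all `n` triangles; as a vertex lies in at most two of them, the set has at least
`n / 2`, i.e. at least `⌊(n+1)/2⌋`, vertices. The odd cut vertices `x 1, x 3, …` form an
independent dominating set of exactly that size.
-/

/-- `S` is an independent dominating set of `G`: pairwise non-adjacent, and every
vertex outside `S` has a neighbour in `S`. -/
def IsIndepDomSet {V : Type*} (G : SimpleGraph V) (S : Finset V) : Prop :=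
  (∀ v ∈ S, ∀ w ∈ S, ¬ G.Adj v w) ∧ ∀ v, v ∉ S → ∃ w ∈ S, G.Adj v w

/-- The chain triangular cactus `T n`: vertices `Sum.inl i` are `x i`
(`0 ≤ i ≤ n`) and `Sum.inr k` is `y (k+1)` (`0 ≤ k ≤ n-1`); the `i`-th triangle
(`1 ≤ i ≤ n`) has vertices `x (i-1)`, `x i`, `y i`. -/
def triChain (n : ℕ) : SimpleGraph (Fin (n + 1) ⊕ Fin n) :=
  SimpleGraph.fromRel fun p q =>
    match p, q with
    | Sum.inl i, Sum.inl j => (i : ℕ) + 1 = (j : ℕ)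
    | Sum.inl i, Sum.inr k => (i : ℕ) = (k : ℕ) ∨ (i : ℕ) = (k : ℕ) + 1
    | _, _ => False

/-- The number of independent dominating sets of the chain triangular cactus `T n`. -/
noncomputable def numIDSTri (n : ℕ) : ℕ :=
  Nat.card {S : Finset (Fin (n + 1) ⊕ Fin n) // IsIndepDomSet (triChain n) S}

/-- The independence domination number of a graph: the minimum cardinality of an
independent dominating set. -/
noncomputable def indepDomNum {V : Type*} (G : SimpleGraph V) : ℕ :=
  sInf {k | ∃ S : Finset V, IsIndepDomSet G S ∧ S.card = k}

open Finset Sum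

lemma IsIndepDomSet.exists_mem_eq_or_adj {V : Type*} {G : SimpleGraph V} {S : Finset V}
    (hS : IsIndepDomSet G S) (v : V) : ∃ w ∈ S, w = v ∨ G.Adj v w := by
  by_cases hv : v ∈ S
  · exact ⟨v, hv, .inl rfl⟩
  · obtain ⟨w, hw, hvw⟩ := hS.2 v hv
    exact ⟨w, hw, .inr hvw⟩

lemma indepDomNum_eq_of_le_card {V : Type*} {G : SimpleGraph V} {S : Finset V}
    (hS : IsIndepDomSet G S) (hmin : ∀ T : Finset V, IsIndepDomSet G T → #S ≤ #T) :
    indepDomNum G = #S :=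
  le_antisymm (Nat.sInf_le ⟨S, hS, rfl⟩)
    (le_csInf ⟨_, S, hS, rfl⟩ fun _ ⟨T, hT, hk⟩ => hk ▸ hmin T hT)

namespace triChain

variable {n : ℕ}

@[simp]
lemma adj_inl_inl (i j : Fin (n + 1)) :
    (triChain n).Adj (inl i) (inl j) ↔ (i : ℕ) + 1 = j ∨ (j : ℕ) + 1 = i := by
  simp only [triChain, SimpleGraph.fromRel_adj, ne_eq, inl.injEq, and_iff_right_iff_imp]
  rintro (h | h) rfl <;> omega

@[simp]
lemma adj_inl_inr (i : Fin (n + 1)) (k : Fin n) :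
    (triChain n).Adj (inl i) (inr k) ↔ (i : ℕ) = k ∨ (i : ℕ) = k + 1 := by
  simp [triChain]

@[simp]
lemma adj_inr_inl (k : Fin n) (i : Fin (n + 1)) :
    (triChain n).Adj (inr k) (inl i) ↔ (i : ℕ) = k ∨ (i : ℕ) = k + 1 := by
  rw [SimpleGraph.adj_comm, adj_inl_inr]

@[simp]
lemma not_adj_inr_inr (k m : Fin n) : ¬ (triChain n).Adj (inr k) (inr m) := by
  simp [triChain]

def triangle (k : Fin n) : Finset (Fin (n + 1) ⊕ Fin n) :=
  {inl k.castSucc, inl k.succ, inr k}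

lemma mem_triangle_iff_eq_or_adj {k : Fin n} {v : Fin (n + 1) ⊕ Fin n} :
    v ∈ triangle k ↔ v = inr k ∨ (triChain n).Adj (inr k) v := by
  rcases v with i | m
  · simp [triangle, Fin.ext_iff, eq_comm]
  · simp [triangle, eq_comm]

lemma card_filter_mem_triangle_le_two (v : Fin (n + 1) ⊕ Fin n) :
    #{k | v ∈ triangle k} ≤ 2 := by
  rcases v with i | m
  · calc #{k | inl i ∈ triangle k}
        ≤ #(univ.filter (Fin.castSucc · = i) ∪ univ.filter (Fin.succ · = i)) := by
          refine card_le_card fun k => ?_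
          simp [triangle, eq_comm]
      _ ≤ 1 + 1 := (card_union_le _ _).trans <| add_le_add
          (card_le_one.2 fun a ha b hb => Fin.castSucc_injective _ (by simp_all))
          (card_le_one.2 fun a ha b hb => Fin.succ_injective _ (by simp_all))
  · calc #{k | inr m ∈ triangle k} ≤ #{m} := card_le_card fun k => by simp [triangle, eq_comm]
      _ ≤ 2 := by simp

theorem le_card_of_isIndepDomSet {S : Finset (Fin (n + 1) ⊕ Fin n)}
    (hS : IsIndepDomSet (triChain n) S) : (n + 1) / 2 ≤ #S := by
  have hcount : #(univ : Finset (Fin n)) * 1 ≤ #S * 2 :=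
    card_mul_le_card_mul (fun k v => v ∈ triangle k)
      (fun k _ => by
        obtain ⟨w, hw, hkw⟩ := hS.exists_mem_eq_or_adj (inr k)
        exact one_le_card.2 ⟨w, mem_filter.2 ⟨hw, mem_triangle_iff_eq_or_adj.2 hkw⟩⟩)
      (fun v _ => by simpa [bipartiteBelow] using card_filter_mem_triangle_le_two v)
  simp only [card_univ, Fintype.card_fin, mul_one] at hcount
  omega

def oddXs (n : ℕ) : Finset (Fin (n + 1) ⊕ Fin n) :=
  univ.map ⟨fun k : Fin ((n + 1) / 2) => inl ⟨2 * k + 1, by omega⟩,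
    fun a b h => Fin.ext (by simp only [inl.injEq, Fin.mk.injEq] at h; omega)⟩

lemma card_oddXs : #(oddXs n) = (n + 1) / 2 := by
  simp [oddXs]

lemma mem_oddXs {v : Fin (n + 1) ⊕ Fin n} :
    v ∈ oddXs n ↔ ∃ i : Fin (n + 1), (i : ℕ) % 2 = 1 ∧ v = inl i := by
  simp only [oddXs, mem_map, mem_univ, true_and]
  constructor
  · rintro ⟨k, rfl⟩
    exact ⟨_, by simp, rfl⟩
  · rintro ⟨i, hi, rfl⟩
    exact ⟨⟨i / 2, by omega⟩, congrArg inl (Fin.ext (by dsimp; omega))⟩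

lemma inl_mem_oddXs {i : ℕ} (hi : i % 2 = 1) (hin : i < n + 1) : inl ⟨i, hin⟩ ∈ oddXs n :=
  mem_oddXs.2 ⟨_, hi, rfl⟩

theorem isIndepDomSet_oddXs (hn : 1 ≤ n) : IsIndepDomSet (triChain n) (oddXs n) := by
  constructor
  · simp only [mem_oddXs]
    rintro _ ⟨i, hi, rfl⟩ _ ⟨j, hj, rfl⟩ hij
    rw [adj_inl_inl] at hij
    omega
  · rintro (⟨i, hin⟩ | ⟨m, hm⟩) hv
    · have hi : i % 2 = 0 := by
        by_contra hodd
        exact hv (inl_mem_oddXs (by omega) hin)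
      -- an even `x i` has an odd neighbour on the right, or on the left when `i = n ≥ 2`
      by_cases hlt : i < n
      · exact ⟨_, inl_mem_oddXs (i := i + 1) (by omega) (by omega), by simp⟩
      · exact ⟨_, inl_mem_oddXs (i := i - 1) (by omega) (by omega), by simp; omega⟩
    · by_cases hodd : m % 2 = 1
      · exact ⟨_, inl_mem_oddXs hodd (by omega), by simp⟩
      · exact ⟨_, inl_mem_oddXs (i := m + 1) (by omega) (by omega), by simp⟩

end triChain

theorem indepDomNum_triChain (n : ℕ) (hn : 1 ≤ n) :
    indepDomNum (triChain n) = (n + 1) / 2 := by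
  rw [← triChain.card_oddXs]
  exact indepDomNum_eq_of_le_card (triChain.isIndepDomSet_oddXs hn)
    fun T hT => triChain.card_oddXs.trans_le (triChain.le_card_of_isIndepDomSet hT)
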